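/- arXiv:2307.06539 — 2 statements merged into one kernel-verified Lean document; each statement's English description precedes it below -/
import Mathlib

section
/- Let 0 < β < 4 and let u₁, u₂ be C² solutions on [0,∞) of u'' = (e^u − 1)/√(1 − (β/4)(e^u − 1)²) with u₁(0) = u₂(0) and u₁(t), u₂(t) → 0 as t → ∞, with u₁, u₂ both strictly negative. Then u₁ ≡ u₂ on [0,∞). -/
/-!
Comparison principle: if `u₁ > u₂` somewhere, then `w = u₁ - u₂`, which vanishes at `0` and at
infinity, attains a positive maximum at some `s > 0`. There `w''(s) ≤ 0`, whereas the equation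
gives `w''(s) = f(u₁ s) - f(u₂ s) > 0` because the nonlinearity `f` is strictly increasing on the
range of negative solutions. By symmetry `u₁ = u₂`.
-/

open Real Filter Set Topology

theorem IsLocalMax.deriv_deriv_nonpos {f : ℝ → ℝ} {a : ℝ} (h : IsLocalMax f a)
    (hc : ContinuousAt f a) : deriv (deriv f) a ≤ 0 := by
  by_contra! hpos
  have hmin : IsLocalMin f a := isLocalMin_of_deriv_deriv_pos hpos h.deriv_eq_zero hc
  have hconst : f =ᶠ[𝓝 a] fun _ ↦ f a :=
    (hmin.and h).mono fun x hx ↦ le_antisymm hx.2 hx.1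
  have : deriv (deriv f) a = 0 := by
    rw [hconst.deriv.deriv_eq, deriv_const', deriv_const]
  exact hpos.ne' this

theorem Continuous.exists_pos_isLocalMax_of_tendsto_atTop_zero {w : ℝ → ℝ} (hw : Continuous w)
    (h0 : w 0 ≤ 0) (hlim : Tendsto w atTop (𝓝 0)) {t₀ : ℝ} (ht₀ : 0 ≤ t₀) (hpos : 0 < w t₀) :
    ∃ s, 0 < s ∧ 0 < w s ∧ IsLocalMax w s := by
  have hsmall : ∀ᶠ t in cocompact ℝ ⊓ 𝓟 (Ici 0), w t ≤ w t₀ := by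
    rw [cocompact_eq_atBot_atTop, inf_sup_right, (disjoint_atBot_principal_Ici (0 : ℝ)).eq_bot,
      bot_sup_eq]
    exact (hlim.eventually (ge_mem_nhds hpos)).filter_mono inf_le_left
  obtain ⟨s, hs, hmax⟩ := hw.continuousOn.exists_isMaxOn' isClosed_Ici ht₀ hsmall
  have hws : 0 < w s := hpos.trans_le (hmax ht₀)
  have hs0 : 0 < s := lt_of_le_of_ne hs fun h ↦ by rw [← h] at hws; linarith
  exact ⟨s, hs0, hws, hmax.isLocalMax (Ici_mem_nhds hs0)⟩

theorem strictMonoOn_div_sqrt_one_sub_mul_sq {c : ℝ} (hc0 : 0 ≤ c) (hc1 : c ≤ 1) :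
    StrictMonoOn (fun x ↦ x / √(1 - c * x ^ 2)) (Ioo (-1) 1) := by
  intro x ⟨hx1, hx1'⟩ y ⟨hy1, hy1'⟩ hxy
  have hpx : 0 < 1 - c * x ^ 2 := by nlinarith
  have hpy : 0 < 1 - c * y ^ 2 := by nlinarith
  have hsx := sqrt_pos.mpr hpx
  have hsy := sqrt_pos.mpr hpy
  dsimp only
  rw [div_lt_div_iff₀ hsx hsy]
  rcases le_or_gt y 0 with hy | hy
  · have hsq : y ^ 2 ≤ x ^ 2 := by nlinarith
    have : √(1 - c * x ^ 2) ≤ √(1 - c * y ^ 2) :=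
      sqrt_le_sqrt (by nlinarith [mul_le_mul_of_nonneg_left hsq hc0])
    nlinarith
  rcases le_or_gt 0 x with hx | hx
  · have hsq : x ^ 2 ≤ y ^ 2 := by nlinarith
    have : √(1 - c * y ^ 2) ≤ √(1 - c * x ^ 2) :=
      sqrt_le_sqrt (by nlinarith [mul_le_mul_of_nonneg_left hsq hc0])
    nlinarith
  · nlinarith [mul_pos hy hsx, mul_neg_of_neg_of_pos hx hsy]

theorem strictMonoOn_exp_sub_one_div_sqrt {c : ℝ} (hc0 : 0 ≤ c) (hc1 : c ≤ 1) :
    StrictMonoOn (fun u ↦ (exp u - 1) / √(1 - c * (exp u - 1) ^ 2)) (Iio (log 2)) := by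
  refine (strictMonoOn_div_sqrt_one_sub_mul_sq hc0 hc1).comp
    (fun a _ b _ hab ↦ by simpa using exp_lt_exp.mpr hab) fun u hu ↦ ?_
  have hu2 : exp u < 2 := by simpa using (lt_log_iff_exp_lt two_pos).mp hu
  constructor <;> linarith [exp_pos u]

theorem le_of_deriv_deriv_eq_of_strictMonoOn {f : ℝ → ℝ} {S : Set ℝ} (hf : StrictMonoOn f S)
    {u v : ℝ → ℝ} (hu : ContDiff ℝ 2 u) (hv : ContDiff ℝ 2 v)
    (hu'' : ∀ t, 0 ≤ t → deriv (deriv u) t = f (u t))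
    (hv'' : ∀ t, 0 ≤ t → deriv (deriv v) t = f (v t))
    (huS : ∀ t, 0 ≤ t → u t ∈ S) (hvS : ∀ t, 0 ≤ t → v t ∈ S)
    (h0 : u 0 ≤ v 0) (hlim : Tendsto (fun t ↦ u t - v t) atTop (𝓝 0)) :
    ∀ t, 0 ≤ t → u t ≤ v t := by
  by_contra! ⟨t₀, ht₀, hgt⟩
  have hw : Continuous (u - v) := hu.continuous.sub hv.continuous
  obtain ⟨s, hs, hws, hmax⟩ := hw.exists_pos_isLocalMax_of_tendsto_atTop_zero
    (by simpa using h0) hlim ht₀ (by simpa using hgt)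
  have hd : deriv (u - v) = deriv u - deriv v := by
    ext t
    exact deriv_sub (hu.differentiable two_ne_zero t) (hv.differentiable two_ne_zero t)
  have hw'' : deriv (deriv (u - v)) s = f (u s) - f (v s) := by
    rw [hd, deriv_sub (hu.differentiable_deriv_two s) (hv.differentiable_deriv_two s),
      hu'' s hs.le, hv'' s hs.le]
  have hf_lt : f (v s) < f (u s) := hf (hvS s hs.le) (huS s hs.le) (by simpa using hws)
  linarith [hmax.deriv_deriv_nonpos hw.continuousAt]

theorem stmt_7 (β : ℝ) (hβ0 : 0 < β) (hβ4 : β < 4) (u₁ u₂ : ℝ → ℝ)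
    (hu₁ : ContDiff ℝ 2 u₁) (hu₂ : ContDiff ℝ 2 u₂)
    (hode₁ : ∀ t, 0 ≤ t → deriv (deriv u₁) t =
      (Real.exp (u₁ t) - 1) / Real.sqrt (1 - β / 4 * (Real.exp (u₁ t) - 1) ^ 2))
    (hode₂ : ∀ t, 0 ≤ t → deriv (deriv u₂) t =
      (Real.exp (u₂ t) - 1) / Real.sqrt (1 - β / 4 * (Real.exp (u₂ t) - 1) ^ 2))
    (h0 : u₁ 0 = u₂ 0)
    (hlim₁ : Filter.Tendsto u₁ Filter.atTop (nhds 0))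
    (hlim₂ : Filter.Tendsto u₂ Filter.atTop (nhds 0))
    (hneg₁ : ∀ t, 0 ≤ t → u₁ t < 0) (hneg₂ : ∀ t, 0 ≤ t → u₂ t < 0) :
    ∀ t, 0 ≤ t → u₁ t = u₂ t := by
  have hf := strictMonoOn_exp_sub_one_div_sqrt (c := β / 4) (by positivity) (by linarith)
  have hS₁ t (ht : 0 ≤ t) : u₁ t < log 2 := (hneg₁ t ht).trans (log_pos one_lt_two)
  have hS₂ t (ht : 0 ≤ t) : u₂ t < log 2 := (hneg₂ t ht).trans (log_pos one_lt_two)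
  intro t ht
  exact le_antisymm
    (le_of_deriv_deriv_eq_of_strictMonoOn hf hu₁ hu₂ hode₁ hode₂ hS₁ hS₂ h0.le
      (by simpa using hlim₁.sub hlim₂) t ht)
    (le_of_deriv_deriv_eq_of_strictMonoOn hf hu₂ hu₁ hode₂ hode₁ hS₂ hS₁ h0.ge
      (by simpa using hlim₂.sub hlim₁) t ht)
end

section
/- Let 0 < β < 4 and let u : (−∞, x₀] → ℝ be negative, strictly decreasing, with u(x) → 0 as x → −∞, satisfying (u')² = F(u) with F(v) = ∫₀^v 2(e^s−1)/√(1−(β/4)(e^s−1)²) ds. Then there exist constants C, c > 0 and exponents 0 < α₁ ≤ α₂ such that c·e^{α₂ x} ≤ −u(x) ≤ C·e^{α₁ x} as x → −∞; in particular u(x) = O(e^{−|x|·α}) for some α > 0 as x → −∞. -/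
/-! For `m ≤ s ≤ 0` the integrand `2 (eˢ - 1) / √(1 - β/4 (eˢ - 1)²)` lies between
`2 s / √(1 - β/4)` and `2 eᵐ s`, so with `m = u x₀` the potential `F(v)` is squeezed between
`eᵐ v²` and `v² / √(1 - β/4)`. As `u` decreases, `-u' = √F(u)` then lies between
`e^{m/2} (-u)` and `(1 - β/4)^{-1/4} (-u)`, and monotonicity of `(-u) e^{-α x}` (a Grönwall comparison) gives the two exponential
bounds on `(-∞, x₀]`. -/

open Real Set

noncomputable def potentialDensity (β s : ℝ) : ℝ :=
  2 * (exp s - 1) / √(1 - β / 4 * (exp s - 1) ^ 2)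

noncomputable def potential (β v : ℝ) : ℝ :=
  ∫ s in (0 : ℝ)..v, potentialDensity β s

lemma exp_sub_one_le_exp_mul {m s : ℝ} (hms : m ≤ s) (hs : s ≤ 0) :
    exp s - 1 ≤ exp m * s := by
  have h₁ : 1 - s ≤ exp (-s) := by linarith [add_one_le_exp (-s)]
  have h₂ : exp s * exp (-s) = 1 := by rw [← exp_add, add_neg_cancel, exp_zero]
  have h₃ : exp m ≤ exp s := exp_le_exp.2 hms
  nlinarith [exp_pos s]

section Density

variable {β : ℝ}

lemma potentialDensity_bounds (hβ0 : 0 ≤ β) (hβ4 : β < 4) {s : ℝ} (hs : s ≤ 0) :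
    2 * (exp s - 1) / √(1 - β / 4) ≤ potentialDensity β s ∧
      potentialDensity β s ≤ 2 * (exp s - 1) := by
  have hnum : 2 * (exp s - 1) ≤ 0 := by linarith [exp_le_one_iff.2 hs]
  have hsq : (exp s - 1) ^ 2 ≤ 1 := by nlinarith [exp_pos s]
  have hσ : 0 < √(1 - β / 4) := sqrt_pos.2 (by linarith)
  have hσD : √(1 - β / 4) ≤ √(1 - β / 4 * (exp s - 1) ^ 2) := sqrt_le_sqrt (by nlinarith)
  have hD1 : √(1 - β / 4 * (exp s - 1) ^ 2) ≤ 1 :=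
    sqrt_le_one.2 (by nlinarith [sq_nonneg (exp s - 1)])
  have hD : 0 < √(1 - β / 4 * (exp s - 1) ^ 2) := hσ.trans_le hσD
  unfold potentialDensity
  constructor
  · rw [div_le_div_iff₀ hσ hD]
    exact mul_le_mul_of_nonpos_left hσD hnum
  · rw [div_le_iff₀ hD]
    nlinarith

lemma continuousOn_potentialDensity (hβ4 : β < 4) :
    ContinuousOn (potentialDensity β) (Iic 0) := by
  refine ContinuousOn.div (by fun_prop) (by fun_prop) fun s hs => (sqrt_pos.2 ?_).ne'
  have h₀ : -1 < exp s - 1 := by linarith [exp_pos s]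
  have h₁ : exp s - 1 ≤ 0 := by linarith [exp_le_one_iff.2 (mem_Iic.1 hs)]
  nlinarith [mul_nonneg (sq_nonneg (exp s - 1)) (sub_nonneg.2 hβ4.le)]

lemma intervalIntegrable_potentialDensity (hβ4 : β < 4) {v : ℝ} (hv : v ≤ 0) :
    IntervalIntegrable (potentialDensity β) MeasureTheory.volume v 0 :=
  ((continuousOn_potentialDensity hβ4).mono (by
    rw [uIcc_of_le hv]; exact Icc_subset_Iic_self)).intervalIntegrable

lemma potential_eq_neg_integral (v : ℝ) : potential β v = -∫ s in v..0, potentialDensity β s :=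
  intervalIntegral.integral_symm _ _

lemma potential_le_sq_div (hβ0 : 0 ≤ β) (hβ4 : β < 4) {v : ℝ} (hv : v ≤ 0) :
    potential β v ≤ v ^ 2 / √(1 - β / 4) := by
  have : ∫ s in v..0, 2 / √(1 - β / 4) * s ≤ ∫ s in v..0, potentialDensity β s := by
    refine intervalIntegral.integral_mono_on hv ((continuous_const_mul _).intervalIntegrable _ _)
      (intervalIntegrable_potentialDensity hβ4 hv) fun s hs => ?_
    refine le_trans ?_ (potentialDensity_bounds hβ0 hβ4 hs.2).1
    rw [div_mul_eq_mul_div]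
    gcongr
    linarith [add_one_le_exp s]
  rw [intervalIntegral.integral_const_mul, integral_id] at this
  rw [potential_eq_neg_integral]
  linarith [show 2 / √(1 - β / 4) * ((0 ^ 2 - v ^ 2) / 2) = -(v ^ 2 / √(1 - β / 4)) by ring]

lemma exp_mul_sq_le_potential (hβ0 : 0 ≤ β) (hβ4 : β < 4) {m v : ℝ} (hmv : m ≤ v)
    (hv : v ≤ 0) : exp m * v ^ 2 ≤ potential β v := by
  have : ∫ s in v..0, potentialDensity β s ≤ ∫ s in v..0, 2 * exp m * s := by
    refine intervalIntegral.integral_mono_on hv (intervalIntegrable_potentialDensity hβ4 hv)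
      ((continuous_const_mul _).intervalIntegrable _ _) fun s hs => ?_
    refine (potentialDensity_bounds hβ0 hβ4 hs.2).2.trans ?_
    linarith [exp_sub_one_le_exp_mul (hmv.trans hs.1) hs.2]
  rw [intervalIntegral.integral_const_mul, integral_id] at this
  rw [potential_eq_neg_integral]
  linarith

lemma potential_mem_sq_bounds (hβ0 : 0 ≤ β) (hβ4 : β < 4) {m v : ℝ} (hmv : m ≤ v)
    (hv : v ≤ 0) :
    (exp (m / 2) * v) ^ 2 ≤ potential β v ∧ potential β v ≤ ((√√(1 - β / 4))⁻¹ * v) ^ 2 := by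
  refine ⟨?_, ?_⟩
  · calc (exp (m / 2) * v) ^ 2 = exp m * v ^ 2 := by rw [mul_pow, ← exp_nat_mul]; ring_nf
      _ ≤ potential β v := exp_mul_sq_le_potential hβ0 hβ4 hmv hv
  · calc potential β v ≤ v ^ 2 / √(1 - β / 4) := potential_le_sq_div hβ0 hβ4 hv
      _ = ((√√(1 - β / 4))⁻¹ * v) ^ 2 := by
        rw [mul_pow, inv_pow, sq_sqrt (sqrt_nonneg _)]; ring

end Density

section Comparison

variable {w : ℝ → ℝ} {a x₀ : ℝ}

lemma le_mul_exp_of_mul_le_deriv (hw : Differentiable ℝ w) (h : ∀ x < x₀, a * w x ≤ deriv w x)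
    {x : ℝ} (hx : x ≤ x₀) : w x ≤ w x₀ * exp (a * (x - x₀)) := by
  have hφ : ∀ y, HasDerivAt (fun y => w y * exp (-(a * y)))
      ((deriv w y - a * w y) * exp (-(a * y))) y := fun y => by
    refine ((hw y).hasDerivAt.fun_mul ((hasDerivAt_id' y).const_mul a).fun_neg.exp).congr_deriv ?_
    ring
  have hmono : MonotoneOn (fun y => w y * exp (-(a * y))) (Iic x₀) := by
    refine monotoneOn_of_deriv_nonneg (convex_Iic x₀)
      (fun y _ => (hφ y).continuousAt.continuousWithinAt)
      (fun y _ => (hφ y).differentiableAt.differentiableWithinAt) fun y hy => ?_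
    rw [interior_Iic] at hy
    rw [(hφ y).deriv]
    exact mul_nonneg (sub_nonneg.2 (h y hy)) (exp_pos _).le
  calc w x = w x * exp (-(a * x)) * exp (a * x) := by
        rw [mul_assoc, ← exp_add, neg_add_cancel, exp_zero, mul_one]
    _ ≤ w x₀ * exp (-(a * x₀)) * exp (a * x) := by
        gcongr ?_ * _
        exact hmono hx self_mem_Iic hx
    _ = w x₀ * exp (a * (x - x₀)) := by rw [mul_assoc, ← exp_add]; ring_nf

lemma mul_exp_le_of_deriv_le_mul (hw : Differentiable ℝ w) (h : ∀ x < x₀, deriv w x ≤ a * w x)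
    {x : ℝ} (hx : x ≤ x₀) : w x₀ * exp (a * (x - x₀)) ≤ w x := by
  have := le_mul_exp_of_mul_le_deriv (w := fun y => -w y) (a := a) hw.neg
    (fun y hy => by rw [deriv.fun_neg]; linarith [h y hy]) hx
  linarith

end Comparison

lemma exp_bounds_of_sq_deriv_bounds {u : ℝ → ℝ} {x₀ a b : ℝ} (hu : Differentiable ℝ u)
    (hanti : AntitoneOn u (Iic x₀)) (hneg : ∀ x ≤ x₀, u x ≤ 0) (ha : 0 ≤ a) (hb : 0 ≤ b)
    (h : ∀ x < x₀, (a * u x) ^ 2 ≤ deriv u x ^ 2 ∧ deriv u x ^ 2 ≤ (b * u x) ^ 2)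
    {x : ℝ} (hx : x ≤ x₀) :
    -u x₀ * exp (b * (x - x₀)) ≤ -u x ∧ -u x ≤ -u x₀ * exp (a * (x - x₀)) := by
  have habs : ∀ y < x₀, |deriv u y| = -deriv u y := fun y hy => by
    refine abs_of_nonpos ?_
    rw [← derivWithin_of_mem_nhds (Iic_mem_nhds hy)]
    exact hanti.derivWithin_nonpos
  have habs_mul : ∀ c, 0 ≤ c → ∀ y < x₀, |c * u y| = c * -u y := fun c hc y hy => by
    rw [abs_mul, abs_of_nonneg hc, abs_of_nonpos (hneg y hy.le)]
  refine ⟨mul_exp_le_of_deriv_le_mul hu.neg (fun y hy => ?_) hx,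
    le_mul_exp_of_mul_le_deriv hu.neg (fun y hy => ?_) hx⟩
  · have := sq_le_sq.1 (h y hy).2
    rw [habs y hy, habs_mul b hb y hy] at this
    rwa [deriv.neg]
  · have := sq_le_sq.1 (h y hy).1
    rw [habs y hy, habs_mul a ha y hy] at this
    rwa [deriv.neg]

theorem stmt_14_general (β : ℝ) (hβ0 : 0 < β) (hβ4 : β < 4) (x₀ : ℝ) (u : ℝ → ℝ)
    (hu : ContDiff ℝ 1 u)
    (huneg : ∀ x, x ≤ x₀ → u x < 0)
    (hanti : StrictAntiOn u (Set.Iic x₀))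
    (hfo : ∀ x, x ≤ x₀ → (deriv u x) ^ 2 =
      ∫ s in (0:ℝ)..(u x),
        2 * (Real.exp s - 1) / Real.sqrt (1 - β / 4 * (Real.exp s - 1) ^ 2)) :
    ∃ C c α₁ α₂ : ℝ, 0 < C ∧ 0 < c ∧ 0 < α₁ ∧ α₁ ≤ α₂ ∧
      ∀ x, x ≤ x₀ →
        c * Real.exp (α₂ * x) ≤ -u x ∧ -u x ≤ C * Real.exp (α₁ * x) := by
  set α₁ := exp (u x₀ / 2)
  set α₂ := (√√(1 - β / 4))⁻¹
  have hα₁₂ : α₁ ≤ α₂ := calc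
    α₁ ≤ 1 := exp_le_one_iff.2 (by linarith [huneg x₀ le_rfl])
    _ ≤ α₂ := (one_le_inv₀ (sqrt_pos.2 (sqrt_pos.2 (by linarith)))).2
      (sqrt_le_one.2 (sqrt_le_one.2 (by linarith)))
  have hsq : ∀ x < x₀, (α₁ * u x) ^ 2 ≤ deriv u x ^ 2 ∧ deriv u x ^ 2 ≤ (α₂ * u x) ^ 2 :=
    fun x hx => (hfo x hx.le).symm ▸ potential_mem_sq_bounds hβ0.le hβ4
      (hanti.antitoneOn hx.le self_mem_Iic hx.le) (huneg x hx.le).le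
  have hshift (α x : ℝ) : exp (α * (x - x₀)) = exp (-(α * x₀)) * exp (α * x) := by
    rw [← exp_add]; ring_nf
  refine ⟨-u x₀ * exp (-(α₁ * x₀)), -u x₀ * exp (-(α₂ * x₀)), α₁, α₂,
    mul_pos (neg_pos.2 (huneg x₀ le_rfl)) (exp_pos _),
    mul_pos (neg_pos.2 (huneg x₀ le_rfl)) (exp_pos _), exp_pos _, hα₁₂, fun x hx => ?_⟩
  have := exp_bounds_of_sq_deriv_bounds (hu.differentiable one_ne_zero) hanti.antitoneOn
    (fun y hy => (huneg y hy).le) (exp_pos _).le (inv_nonneg.2 (sqrt_nonneg _)) hsq hx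
  simpa only [hshift, mul_assoc] using this

theorem stmt_14 (β : ℝ) (hβ0 : 0 < β) (hβ4 : β < 4) (x₀ : ℝ) (u : ℝ → ℝ)
    (hu : ContDiff ℝ 1 u)
    (huneg : ∀ x, x ≤ x₀ → u x < 0)
    (hanti : StrictAntiOn u (Set.Iic x₀))
    (hlim : Filter.Tendsto u Filter.atBot (nhds 0))
    (hfo : ∀ x, x ≤ x₀ → (deriv u x) ^ 2 =
      ∫ s in (0:ℝ)..(u x),
        2 * (Real.exp s - 1) / Real.sqrt (1 - β / 4 * (Real.exp s - 1) ^ 2)) :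
    ∃ C c α₁ α₂ : ℝ, 0 < C ∧ 0 < c ∧ 0 < α₁ ∧ α₁ ≤ α₂ ∧
      ∀ x, x ≤ x₀ →
        c * Real.exp (α₂ * x) ≤ -u x ∧ -u x ≤ C * Real.exp (α₁ * x) :=
  stmt_14_general β hβ0 hβ4 x₀ u hu huneg hanti hfo
end
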